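/- arXiv:1106.2586 — 3 statements merged into one kernel-verified Lean document; each statement's English description precedes it below -/
import Mathlib

section
/- For elements x, y in a Coxeter group W, the set {uv : u ≤ x, v ≤ y} (products of elements below x and y in Bruhat order) contains a unique maximal element in Bruhat order, called the Demazure product x * y. -/
/-!
The maximum is a greedy product: for a reduced word `x = s i₁ ⋯ s iₖ`, multiply `y` on the left by
`s iₖ, …, s i₁` in turn, skipping each factor that would shorten the element. The result is
`u * y` for a subword product `u`, and it dominates every `u * v` with `u ≤ x`, `v ≤ y` by the
lifting property `u ≤ w → s u ≤ max (w, s w)`, applied letter by letter along a subword of the same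
reduced word. That every reduced word of `x` carries such a subword, and the lifting property,
both come from the description of the Bruhat order by chains of reflections and the strong
exchange condition; the latter is proved with Tits' sign representation of `W` on `W × {±1}`.
-/

/-- The Bruhat order on a Coxeter group, defined via the subword property:
`u ≤ v` iff some reduced word for `v` contains a subword whose product is `u`. -/
def bruhatLE {B W : Type*} [Group W] {M : CoxeterMatrix B} (cs : CoxeterSystem M W)
    (u v : W) : Prop :=
  ∃ l : List B, cs.IsReduced l ∧ cs.wordProd l = v ∧
    ∃ l' : List B, l'.Sublist l ∧ cs.wordProd l' = u

open List

theorem List.count_map_mulAut {G : Type*} [Group G] [DecidableEq G] (f : MulAut G) (t : G)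
    (l : List G) : count t (l.map f) = count (f⁻¹ t) l := by
  simpa using count_map_of_injective l f f.injective (f⁻¹ t)

namespace CoxeterSystem

variable {B W : Type*} [Group W] {M : CoxeterMatrix B} (cs : CoxeterSystem M W)

local prefix:100 "s" => cs.simple
local prefix:100 "π" => cs.wordProd
local prefix:100 "ℓ" => cs.length
local prefix:100 "ris" => cs.rightInvSeq
local prefix:100 "lis" => cs.leftInvSeq

open scoped Classical

theorem rightInvSeq_append (ω ω' : List B) :
    ris (ω ++ ω') = (ris ω).map (MulAut.conj (π ω')⁻¹) ++ ris ω' := by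
  induction ω with
  | nil => simp
  | cons i ω ih =>
    simp only [cons_append, rightInvSeq, ih, map_cons, wordProd_append, MulAut.conj_apply]
    group

theorem leftInvSeq_eq_map_rightInvSeq (ω : List B) :
    lis ω = (ris ω).map (MulAut.conj (π ω)) := by
  induction ω with
  | nil => simp
  | cons i ω ih =>
    simp only [leftInvSeq, rightInvSeq, ih, map_cons, map_map, wordProd_cons]
    congr 1
    · simp [mul_assoc]
    · exact map_congr_left fun u _ => by simp [mul_assoc]

theorem prod_map_alternatingWord_two_mul {G : Type*} [Monoid G] (f : B → G) (i i' : B)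
    (m : ℕ) : ((alternatingWord i i' (2 * m)).map f).prod = (f i * f i') ^ m := by
  induction m with
  | zero => simp [alternatingWord]
  | succ m ih =>
    rw [mul_add_one, alternatingWord_succ', alternatingWord_succ', if_neg (by simp [parity_simps]),
      if_pos (by simp), map_cons, map_cons, prod_cons, prod_cons, ih, pow_succ', mul_assoc]

theorem even_count_leftInvSeq_alternatingWord (i i' : B) (t : W) :
    Even (count t (lis (alternatingWord i i' (2 * M i i')))) := by
  set l := (range (M i i')).map fun k => π alternatingWord i' i (2 * k + 1)
  have h : lis (alternatingWord i i' (2 * M i i')) = l ++ l := by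
    apply ext_getElem (by simp [l, two_mul])
    intro k hk _
    rw [getElem_leftInvSeq_alternatingWord _ _ _ _ _ (by simpa using hk)]
    simp only [l, getElem_append, getElem_map, getElem_range, length_map, length_range]
    split_ifs with hkM
    · rfl
    · obtain ⟨n, rfl⟩ : ∃ n, k = n + M i i' := ⟨k - M i i', by omega⟩
      have hdiv (m : ℕ) : (2 * m + 1) / 2 = m := by omega
      simp [prod_alternatingWord_eq_mul_pow, hdiv, pow_add, M.symmetric i i', parity_simps]
  rw [h, count_append]
  exact ⟨_, rfl⟩

/-- Tits' permutation attached to `s i`. Through the resulting action of `W` on `W × ℤˣ`, the parity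
of the number of occurrences of `t` in `ris ω` depends only on `π ω`. -/
noncomputable def signPerm (i : B) : Equiv.Perm (W × ℤˣ) :=
  Function.Involutive.toPerm (fun p => (s i * p.1 * s i, if p.1 = s i then -p.2 else p.2)) <| by
    rintro ⟨t, ε⟩
    by_cases ht : t = s i <;> simp [ht, mul_assoc, mul_eq_one_iff_eq_inv]

theorem signPerm_apply (i : B) (p : W × ℤˣ) :
    cs.signPerm i p = (s i * p.1 * s i, if p.1 = s i then -p.2 else p.2) :=
  rfl

theorem prod_map_signPerm_apply (ω : List B) (t : W) (ε : ℤˣ) :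
    (ω.map cs.signPerm).prod (t, ε) = (π ω * t * (π ω)⁻¹, (-1) ^ count t (ris ω) * ε) := by
  induction ω with
  | nil => simp
  | cons i ω ih =>
    have h : π ω * t * (π ω)⁻¹ = s i ↔ (π ω)⁻¹ * s i * π ω = t := by
      constructor <;> intro h <;> rw [← h] <;> group
    rw [map_cons, prod_cons, Equiv.Perm.mul_apply, ih]
    refine Prod.ext (by simp [signPerm_apply, wordProd_cons, mul_assoc]) ?_
    simp only [signPerm_apply, rightInvSeq, count_cons, beq_iff_eq, h]
    split_ifs <;> simp [pow_succ]

theorem isLiftable_signPerm : M.IsLiftable cs.signPerm := by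
  intro i i'
  rw [← prod_map_alternatingWord_two_mul]
  ext ⟨t, ε⟩ : 1
  have h1 : π alternatingWord i i' (2 * M i i') = 1 := by
    rw [wordProd, prod_map_alternatingWord_two_mul, simple_mul_simple_pow]
  have h2 := cs.even_count_leftInvSeq_alternatingWord i i' t
  rw [leftInvSeq_eq_map_rightInvSeq, h1, map_one, count_map_mulAut, inv_one,
    MulAut.one_apply] at h2
  simp [prod_map_signPerm_apply, h1, h2.neg_one_pow]

theorem lift_apply_wordProd {G : Type*} [Monoid G] {f : B → G} (hf : M.IsLiftable f)
    (ω : List B) : cs.lift ⟨f, hf⟩ (π ω) = (ω.map f).prod := by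
  induction ω with
  | nil => simp
  | cons i ω ih => simp [wordProd_cons, ih, lift_apply_simple]

theorem even_count_rightInvSeq_iff {ω ω' : List B} (h : π ω = π ω') (t : W) :
    Even (count t (ris ω)) ↔ Even (count t (ris ω')) := by
  have := congrArg (fun w => (cs.lift ⟨_, cs.isLiftable_signPerm⟩ w (t, 1)).2) h
  simp only [lift_apply_wordProd, prod_map_signPerm_apply, mul_one] at this
  simp only [← neg_one_pow_eq_one_iff_even (R := ℤˣ) (by decide), this]

theorem count_rightInvSeq_palindrome (ρ : List B) (i : B) :
    count (π ρ * s i * (π ρ)⁻¹) (ris (ρ ++ i :: ρ.reverse)) = 2 * count (s i) (ris ρ) + 1 := by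
  rw [rightInvSeq_append, count_append, count_map_mulAut, rightInvSeq, count_cons,
    rightInvSeq_reverse, count_reverse, leftInvSeq_eq_map_rightInvSeq, count_map_mulAut]
  simp [wordProd_cons, mul_assoc, two_mul, add_assoc]

/-- The strong exchange condition. Write `t = π ρ * s i * (π ρ)⁻¹`; then `t` occurs an odd number of
times in `ris (ρ ++ i :: ρ.reverse)`, and not at all in `ris ω'` for a reduced word `ω'` of
`π ω * t`. Since `ω' ++ ρ ++ i :: ρ.reverse` is a word for `π ω`, parity puts `t` in `ris ω`. -/
theorem mem_rightInvSeq_of_isRightInversion {ω : List B} {t : W}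
    (ht : cs.IsRightInversion (π ω) t) : t ∈ ris ω := by
  obtain ⟨htr, hlt⟩ := ht
  obtain ⟨v, i, rfl⟩ := htr
  obtain ⟨ρ, rfl⟩ := cs.wordProd_surjective v
  obtain ⟨ω', hω', hω'π⟩ := cs.exists_isReduced (π ω * (π ρ * s i * (π ρ)⁻¹))
  set t := π ρ * s i * (π ρ)⁻¹
  have ht : cs.IsReflection t := ⟨π ρ, i, rfl⟩
  have hτ : π (ρ ++ i :: ρ.reverse) = t := by simp [wordProd_append, wordProd_cons, t, mul_assoc]
  have hπ : π (ω' ++ (ρ ++ i :: ρ.reverse)) = π ω := by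
    rw [wordProd_append, hτ, ← hω'π, mul_assoc, ht.mul_self, mul_one]
  have hω't : t ∉ ris ω' := fun hmem => by
    have := (cs.isRightInversion_of_mem_rightInvSeq hω' hmem).2
    rw [← hω'π, mul_assoc, ht.mul_self, mul_one] at this
    omega
  have hodd : ¬ Even (count t (ris (ω' ++ (ρ ++ i :: ρ.reverse)))) := by
    have hfix : (MulAut.conj t⁻¹)⁻¹ t = t := by simp
    rw [rightInvSeq_append, count_append, count_map_mulAut, hτ, hfix, count_eq_zero.2 hω't,
      zero_add, count_rightInvSeq_palindrome]
    simp
  rw [cs.even_count_rightInvSeq_iff hπ] at hodd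
  by_contra hmem
  rw [count_eq_zero.2 hmem] at hodd
  exact hodd Even.zero

theorem exists_wordProd_eraseIdx_eq_mul {ω : List B} {t : W}
    (ht : cs.IsRightInversion (π ω) t) : ∃ j < ω.length, π (ω.eraseIdx j) = π ω * t := by
  obtain ⟨j, hj, rfl⟩ := mem_iff_getElem.1 (cs.mem_rightInvSeq_of_isRightInversion ht)
  refine ⟨j, by simpa using hj, ?_⟩
  rw [← wordProd_mul_getD_rightInvSeq, getD_eq_getElem]

def BruhatStep (u w : W) : Prop := ∃ t, cs.IsReflection t ∧ u * t = w ∧ ℓ u < ℓ w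

/-- The Bruhat order in its original definition, by chains of reflections. -/
def ChainLE : W → W → Prop := Relation.ReflTransGen cs.BruhatStep

variable {cs}

theorem ChainLE.refl (w : W) : cs.ChainLE w w := Relation.ReflTransGen.refl

theorem ChainLE.trans {u v w : W} (h₁ : cs.ChainLE u v) (h₂ : cs.ChainLE v w) :
    cs.ChainLE u w :=
  Relation.ReflTransGen.trans h₁ h₂

theorem BruhatStep.chainLE {u w : W} (h : cs.BruhatStep u w) : cs.ChainLE u w :=
  Relation.ReflTransGen.single h

theorem bruhatStep_simple_mul {w : W} {i : B} (h : ℓ w < ℓ (s i * w)) :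
    cs.BruhatStep w (s i * w) :=
  ⟨w⁻¹ * s i * w, ⟨w⁻¹, i, by rw [inv_inv]⟩, by group, h⟩

/-- Write `c` as `s i` followed by a reduced word of `s i * c`. Strong exchange deletes a letter of
it to reach `a = c t`; not the first one, since `s i * a ≠ c`. So `s i * a` is a reduced word of
`s i * c` with one letter deleted. -/
theorem BruhatStep.simple_mul {a c : W} {i : B} (h : cs.BruhatStep a c) (hac : s i * a ≠ c) :
    cs.BruhatStep (s i * a) (s i * c) := by
  obtain ⟨t, ht, hat, hlt⟩ := h
  have hca : c * t = a := by rw [← hat, mul_assoc, ht.mul_self, mul_one]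
  obtain ⟨ω, hω, hωπ⟩ := cs.exists_isReduced (s i * c)
  have hc : π (i :: ω) = c := by rw [wordProd_cons, ← hωπ, simple_mul_simple_cancel_left]
  obtain ⟨j, hj, hπj⟩ := cs.exists_wordProd_eraseIdx_eq_mul (ω := i :: ω) (t := t)
    ⟨ht, by rwa [hc, hca]⟩
  rw [hc, hca] at hπj
  cases j with
  | zero =>
    refine absurd ?_ hac
    rw [← hπj, eraseIdx_cons_zero, ← hωπ, simple_mul_simple_cancel_left]
  | succ k =>
    have hsa : s i * a = π (ω.eraseIdx k) := by
      rw [← hπj, eraseIdx_cons_succ, wordProd_cons, simple_mul_simple_cancel_left]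
    refine ⟨t, ht, by rw [mul_assoc, hat], ?_⟩
    have h₁ := cs.length_wordProd_le (ω.eraseIdx k)
    have h₂ := length_eraseIdx_add_one (l := ω) (i := k) (by simpa using hj)
    have h₃ : ℓ (s i * c) = ω.length := by rw [hωπ]; exact hω
    rw [hsa]
    omega

theorem ChainLE.simple_mul_of_length_lt {u w : W} {i : B} (h : cs.ChainLE u w)
    (hw : ℓ (s i * w) < ℓ w) : cs.ChainLE (s i * u) w := by
  induction h using Relation.ReflTransGen.head_induction_on with
  | refl =>
    have h := bruhatStep_simple_mul (cs := cs) (w := s i * w) (i := i)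
      (by rwa [simple_mul_simple_cancel_left])
    rw [simple_mul_simple_cancel_left] at h
    exact h.chainLE
  | @head u c huc hcw ih =>
    by_cases hsu : s i * u = c
    · exact hsu ▸ hcw
    · exact (huc.simple_mul hsu).chainLE.trans ih

theorem ChainLE.simple_mul_of_lt_length {u w : W} {i : B} (h : cs.ChainLE u w)
    (hw : ℓ w < ℓ (s i * w)) : cs.ChainLE (s i * u) (s i * w) :=
  (h.trans (bruhatStep_simple_mul hw).chainLE).simple_mul_of_length_lt
    (by rwa [simple_mul_simple_cancel_left])

theorem ChainLE.eq_or_length_lt {u w : W} (h : cs.ChainLE u w) : u = w ∨ ℓ u < ℓ w := by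
  induction h using Relation.ReflTransGen.head_induction_on with
  | refl => exact .inl rfl
  | head huc _ ih =>
    obtain ⟨_, _, rfl, hlt⟩ := huc
    exact .inr (ih.elim (fun h => h ▸ hlt) hlt.trans)

theorem ChainLE.antisymm {u w : W} (h₁ : cs.ChainLE u w) (h₂ : cs.ChainLE w u) : u = w := by
  rcases h₁.eq_or_length_lt with h | h₁
  · exact h
  rcases h₂.eq_or_length_lt with h | h₂
  · exact h.symm
  omega

theorem ChainLE.exists_sublist {u w : W} (h : cs.ChainLE u w) {ω : List B} (hω : π ω = w) :
    ∃ σ, σ <+ ω ∧ π σ = u := by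
  induction h using Relation.ReflTransGen.head_induction_on with
  | refl => exact ⟨ω, Sublist.refl ω, hω⟩
  | @head u _ huc _ ih =>
    obtain ⟨σ, hσ, rfl⟩ := ih
    obtain ⟨t, ht, hut, hlt⟩ := huc
    have hσt : π σ * t = u := by rw [← hut, mul_assoc, ht.mul_self, mul_one]
    obtain ⟨j, -, hj⟩ := cs.exists_wordProd_eraseIdx_eq_mul (ω := σ) ⟨ht, hσt ▸ hlt⟩
    exact ⟨σ.eraseIdx j, (eraseIdx_sublist σ j).trans hσ, hj.trans hσt⟩

theorem IsReduced.length_lt_length_simple_mul {i : B} {ω : List B} (h : cs.IsReduced (i :: ω)) :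
    ℓ (π ω) < ℓ (s i * π ω) := by
  have hω : ℓ (π ω) = ω.length := h.drop 1
  have hiω : ℓ (π (i :: ω)) = ω.length + 1 := h
  rw [wordProd_cons] at hiω
  omega

theorem chainLE_wordProd_of_sublist {σ ω : List B} (h : σ <+ ω) (hω : cs.IsReduced ω) :
    cs.ChainLE (π σ) (π ω) := by
  induction h with
  | slnil => exact .refl _
  | cons i _ ih =>
    rw [wordProd_cons]
    exact (ih (hω.drop 1)).trans (bruhatStep_simple_mul hω.length_lt_length_simple_mul).chainLE
  | cons_cons i _ ih =>
    rw [wordProd_cons, wordProd_cons]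
    exact (ih (hω.drop 1)).simple_mul_of_lt_length hω.length_lt_length_simple_mul

variable (cs) in
theorem bruhatLE_iff_chainLE {u w : W} : bruhatLE cs u w ↔ cs.ChainLE u w := by
  constructor
  · rintro ⟨ω, hω, rfl, σ, hσ, rfl⟩
    exact chainLE_wordProd_of_sublist hσ hω
  · intro h
    obtain ⟨ω, hω, rfl⟩ := cs.exists_isReduced w
    obtain ⟨σ, hσ, rfl⟩ := h.exists_sublist rfl
    exact ⟨ω, hω, rfl, σ, hσ, rfl⟩

variable (cs)

noncomputable def simpleDemazure (i : B) (w : W) : W :=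
  if ℓ w < ℓ (s i * w) then s i * w else w

/-- `s i₁ ⋆ ⋯ ⋆ s iₖ ⋆ y` for `ω = [i₁, …, iₖ]`; this is `π ω ⋆ y` when `ω` is reduced. -/
noncomputable def wordDemazure (ω : List B) (y : W) : W :=
  ω.foldr cs.simpleDemazure y

variable {cs}

theorem chainLE_simpleDemazure (i : B) (w : W) : cs.ChainLE w (cs.simpleDemazure i w) := by
  unfold simpleDemazure
  split_ifs with hw
  · exact (bruhatStep_simple_mul hw).chainLE
  · exact .refl w

theorem ChainLE.simple_mul_simpleDemazure {u w : W} (h : cs.ChainLE u w) (i : B) :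
    cs.ChainLE (s i * u) (cs.simpleDemazure i w) := by
  unfold simpleDemazure
  split_ifs with hw
  · exact h.simple_mul_of_lt_length hw
  · exact h.simple_mul_of_length_lt ((not_lt.1 hw).lt_of_ne (cs.length_simple_mul_ne w i))

theorem exists_sublist_wordProd_mul_eq_wordDemazure (ω : List B) (y : W) :
    ∃ σ, σ <+ ω ∧ π σ * y = cs.wordDemazure ω y := by
  induction ω with
  | nil => exact ⟨[], .slnil, by simp [wordDemazure]⟩
  | cons i ω ih =>
    obtain ⟨σ, hσ, hσy⟩ := ih
    rw [wordDemazure, foldr_cons, ← wordDemazure, simpleDemazure]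
    split_ifs
    · exact ⟨i :: σ, hσ.cons_cons i, by rw [wordProd_cons, mul_assoc, hσy]⟩
    · exact ⟨σ, hσ.cons i, hσy⟩

theorem ChainLE.wordProd_mul_wordDemazure {v y : W} (hv : cs.ChainLE v y) {σ ω : List B}
    (hσ : σ <+ ω) : cs.ChainLE (π σ * v) (cs.wordDemazure ω y) := by
  induction hσ with
  | slnil => simpa [wordDemazure] using hv
  | cons i _ ih => exact ih.trans (chainLE_simpleDemazure i _)
  | cons_cons i _ ih =>
    rw [wordProd_cons, mul_assoc]
    exact ih.simple_mul_simpleDemazure i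

end CoxeterSystem

/-- For `x, y` in a Coxeter group, the set `{uv : u ≤ x, v ≤ y}` contains a unique
maximal element in Bruhat order (the Demazure product `x * y`). -/
theorem demazure_product_exists_unique {B W : Type*} [Group W] {M : CoxeterMatrix B}
    (cs : CoxeterSystem M W) (x y : W) :
    ∃! m : W, (∃ u v : W, bruhatLE cs u x ∧ bruhatLE cs v y ∧ m = u * v) ∧
      ∀ z : W, (∃ u v : W, bruhatLE cs u x ∧ bruhatLE cs v y ∧ z = u * v) →
        bruhatLE cs z m := by
  obtain ⟨ω, hω, rfl⟩ := cs.exists_isReduced x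
  obtain ⟨σ, hσ, hσy⟩ := cs.exists_sublist_wordProd_mul_eq_wordDemazure ω y
  have hmem : ∃ u v : W, bruhatLE cs u (cs.wordProd ω) ∧ bruhatLE cs v y ∧
      cs.wordDemazure ω y = u * v :=
    ⟨_, y, ⟨ω, hω, rfl, σ, hσ, rfl⟩, (cs.bruhatLE_iff_chainLE).2 (.refl y), hσy.symm⟩
  have hmax : ∀ z : W, (∃ u v : W, bruhatLE cs u (cs.wordProd ω) ∧ bruhatLE cs v y ∧
      z = u * v) → cs.ChainLE z (cs.wordDemazure ω y) := by
    rintro _ ⟨u, v, hu, hv, rfl⟩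
    obtain ⟨σ', hσ', rfl⟩ := ((cs.bruhatLE_iff_chainLE).1 hu).exists_sublist rfl
    exact ((cs.bruhatLE_iff_chainLE).1 hv).wordProd_mul_wordDemazure hσ'
  refine ⟨_, ⟨hmem, fun z hz => (cs.bruhatLE_iff_chainLE).2 (hmax z hz)⟩, fun m ⟨hm, hmmax⟩ => ?_⟩
  exact (hmax m hm).antisymm ((cs.bruhatLE_iff_chainLE).1 (hmmax _ hmem))
end

section
/- In a finite Weyl group W with longest element w_S, the equivariant localization coefficients satisfy d_{(x^σ)⁻¹, (y^σ)⁻¹} = w_S y⁻¹ · d_{x,y}, where w^σ = w_S w w_S denotes conjugation by the longest element, d_{v,w} = Σ β_{j₁}···β_{j_m} summed over subwords s_{i_{j₁}}···s_{i_{j_m}} of a fixed reduced word w = s_{i₁}···s_{i_p} that are reduced expressions for v, with β_j = s_{i₁}···s_{i_{j−1}} α_{i_j}, and the Weyl group acts naturally on the polynomial ring generated by the roots. -/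
/-!
Decorate each letter of a word `l` with its root `β_j`; then `d_{v,l}` is the sum, over the
subwords spelling a reduced word of `v`, of the products of their decorations. Decorating
`l.reverse.map σ` gives the decorated `l`, reversed, with letters relabelled by `σ` and roots
moved by `w_S y⁻¹`: the signs in `w_S α_i = -α_{σ i}` and `s_i α_i = -α_i` cancel. Reversing a
subword inverts the element it spells, and relabelling by `σ` is conjugation by `w_S`, which
preserves length because `w_S² = 1`.

That `w_S² = 1` is Tits' argument: the sign cocycle `η(w, t)` of the action of `W` on
`T × {±1}` is `-1` exactly at the right inversions `t` of `w`, so every reflection is a right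
inversion of `w_S`, and the cocycle rule gives `η(w_S², s) = 1` for every simple `s`; hence
`w_S²` has no right descent.
-/

open scoped Classical

/-- The equivariant localization coefficient `d_{v,w}` computed with respect to a word
`l` (intended to be a reduced word for `w`): the sum, over all subwords of `l` that are
reduced expressions for `v`, of the products `β_{j₁} ⋯ β_{j_m}`, where
`β_j = s_{i₁} ⋯ s_{i_{j−1}} α_{i_j}`.  Here `A` is the polynomial ring generated by the
roots, `act` the natural action of `W` on `A`, and `αr i` the simple root `α_i`. -/
noncomputable def dCoef {B W A : Type*} [Group W] [CommRing A] {M : CoxeterMatrix B}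
    (cs : CoxeterSystem M W) (act : W →* RingAut A) (αr : B → A)
    (l : List B) (v : W) : A :=
  ((l.zipIdx.map Prod.swap).sublists.map (fun s =>
    if cs.wordProd (s.map Prod.snd) = v ∧ (s.map Prod.snd).length = cs.length v then
      (s.map (fun p => act (cs.wordProd (l.take p.1)) (αr p.2))).prod
    else 0)).sum

namespace CoxeterSystem

noncomputable section

variable {B W : Type*} [Group W] {M : CoxeterMatrix B} (cs : CoxeterSystem M W)

local prefix:100 "π" => cs.wordProd
local prefix:100 "ℓ" => cs.length

theorem simple_mul_mul_simple_eq_iff (i : B) (u x : W) :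
    cs.simple i * u * cs.simple i = x ↔ u = cs.simple i * x * cs.simple i := by
  constructor <;> rintro rfl <;> simp [mul_assoc]

/-- Tits' action of `s i` on `T × {±1}`, with the set of reflections `T` enlarged to `W`. -/
def signFlip (i : B) (p : W × ℤˣ) : W × ℤˣ :=
  (cs.simple i * p.1 * cs.simple i, if p.1 = cs.simple i then -p.2 else p.2)

theorem signFlip_involutive (i : B) : Function.Involutive (cs.signFlip i) := by
  rintro ⟨t, ε⟩
  by_cases ht : t = cs.simple i <;>
    simp [signFlip, ht, mul_assoc, mul_eq_one_iff_eq_inv]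

def signFlipPerm (i : B) : Equiv.Perm (W × ℤˣ) := (cs.signFlip_involutive i).toPerm

theorem signFlipPerm_apply (i : B) (p : W × ℤˣ) : cs.signFlipPerm i p = cs.signFlip i p := rfl

theorem inv_pow_mul_simple (i j : B) (n : ℕ) :
    ((cs.simple i * cs.simple j) ^ n)⁻¹ * cs.simple j =
      cs.simple j * (cs.simple i * cs.simple j) ^ n := by
  have h : MulAut.conj (cs.simple j) ((cs.simple i * cs.simple j) ^ n) =
      ((cs.simple i * cs.simple j) ^ n)⁻¹ := by
    rw [map_pow, ← inv_pow, MulAut.conj_apply]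
    simp [mul_assoc]
  rw [MulAut.conj_apply, cs.inv_simple] at h
  rw [← h]
  simp [mul_assoc]

theorem signFlipPerm_mul_pow_apply (i j : B) (n : ℕ) (t : W) (ε : ℤˣ) :
    ((cs.signFlipPerm i * cs.signFlipPerm j) ^ n) (t, ε) =
      ((cs.simple i * cs.simple j) ^ n * t * ((cs.simple i * cs.simple j) ^ n)⁻¹,
        ε * ∏ k ∈ Finset.range (2 * n),
          if t = cs.simple j * (cs.simple i * cs.simple j) ^ k then -1 else 1) := by
  induction n with
  | zero => simp
  | succ n ih =>
    have hconj : ∀ x : W, (cs.simple i * cs.simple j) ^ n * t *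
        ((cs.simple i * cs.simple j) ^ n)⁻¹ = x ↔
        t = ((cs.simple i * cs.simple j) ^ n)⁻¹ * x * (cs.simple i * cs.simple j) ^ n := by
      intro x
      constructor <;> rintro rfl <;> group
    have h0 : (cs.simple i * cs.simple j) ^ n * t * ((cs.simple i * cs.simple j) ^ n)⁻¹ =
        cs.simple j ↔ t = cs.simple j * (cs.simple i * cs.simple j) ^ (2 * n) := by
      rw [hconj, cs.inv_pow_mul_simple, mul_assoc, ← pow_add, two_mul]
    have h1 : (cs.simple i * cs.simple j) ^ n * t * ((cs.simple i * cs.simple j) ^ n)⁻¹ =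
        cs.simple j * cs.simple i * cs.simple j ↔
        t = cs.simple j * (cs.simple i * cs.simple j) ^ (2 * n + 1) := by
      rw [hconj, mul_assoc (cs.simple j), ← mul_assoc, cs.inv_pow_mul_simple, mul_assoc,
        mul_assoc, ← pow_succ', ← pow_add]
      ring_nf
    rw [pow_succ', Equiv.Perm.mul_apply, Equiv.Perm.mul_apply, ih, signFlipPerm_apply,
      signFlipPerm_apply]
    simp only [signFlip]
    refine Prod.ext ?_ ?_
    · simp only [pow_succ', mul_inv_rev, cs.inv_simple, mul_assoc]
    · rw [show 2 * (n + 1) = 2 * n + 1 + 1 by ring, Finset.prod_range_succ,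
        Finset.prod_range_succ, simple_mul_mul_simple_eq_iff, h0, h1]
      by_cases ha : t = cs.simple j * (cs.simple i * cs.simple j) ^ (2 * n) <;>
        by_cases hb : t = cs.simple j * (cs.simple i * cs.simple j) ^ (2 * n + 1) <;>
        simp [ha, hb]

theorem isLiftable_signFlipPerm : M.IsLiftable cs.signFlipPerm := by
  intro i j
  ext ⟨t, ε⟩ : 1
  -- `(s i * s j) ^ M i j = 1`, so the `2 * M i j` signs are two copies of the first `M i j`.
  have hm := cs.simple_mul_simple_pow i j
  rw [signFlipPerm_mul_pow_apply, hm, one_mul, inv_one, mul_one, two_mul,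
    Finset.prod_range_add]
  simp only [pow_add, hm, one_mul, Int.units_mul_self, mul_one, Equiv.Perm.one_apply]

def signRep : W →* Equiv.Perm (W × ℤˣ) := cs.lift ⟨cs.signFlipPerm, cs.isLiftable_signFlipPerm⟩

theorem signRep_simple (i : B) : cs.signRep (cs.simple i) = cs.signFlipPerm i :=
  cs.lift_apply_simple cs.isLiftable_signFlipPerm i

theorem signRep_wordProd_apply (ω : List B) (t : W) (ε : ℤˣ) :
    cs.signRep (π ω) (t, ε) =
      (π ω * t * (π ω)⁻¹, ε * (-1) ^ (cs.rightInvSeq ω).count t) := by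
  induction ω with
  | nil => simp
  | cons i ω ih =>
    rw [cs.wordProd_cons, map_mul, Equiv.Perm.mul_apply, ih, signRep_simple, signFlipPerm_apply]
    have hcond : π ω * t * (π ω)⁻¹ = cs.simple i ↔ (π ω)⁻¹ * cs.simple i * π ω = t := by
      constructor <;> intro h <;> rw [← h] <;> group
    simp only [signFlip, rightInvSeq, List.count_cons, beq_iff_eq, hcond]
    refine Prod.ext (by simp [mul_assoc]) ?_
    by_cases h : (π ω)⁻¹ * cs.simple i * π ω = t <;> simp [h, pow_succ]

def inversionSign (w t : W) : ℤˣ := (cs.signRep w (t, 1)).2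

theorem inversionSign_wordProd (ω : List B) (t : W) :
    cs.inversionSign (π ω) t = (-1) ^ (cs.rightInvSeq ω).count t := by
  simp [inversionSign, signRep_wordProd_apply]

theorem signRep_apply (w t : W) (ε : ℤˣ) :
    cs.signRep w (t, ε) = (w * t * w⁻¹, ε * cs.inversionSign w t) := by
  obtain ⟨ω, rfl⟩ := cs.wordProd_surjective w
  rw [signRep_wordProd_apply, inversionSign_wordProd]

theorem inversionSign_mul (u v t : W) :
    cs.inversionSign (u * v) t = cs.inversionSign u (v * t * v⁻¹) * cs.inversionSign v t := by
  rw [inversionSign, map_mul, Equiv.Perm.mul_apply, signRep_apply cs v, signRep_apply, one_mul,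
    mul_comm]

theorem inversionSign_one (t : W) : cs.inversionSign 1 t = 1 := by
  simpa using cs.inversionSign_wordProd [] t

theorem inversionSign_simple_self (k : B) : cs.inversionSign (cs.simple k) (cs.simple k) = -1 := by
  simpa using cs.inversionSign_wordProd [k] (cs.simple k)

theorem inversionSign_self {t : W} (ht : cs.IsReflection t) : cs.inversionSign t t = -1 := by
  obtain ⟨v, k, rfl⟩ := ht
  have hcancel := cs.inversionSign_mul v⁻¹ v (cs.simple k)
  have hsplit := cs.inversionSign_mul v (cs.simple k * v⁻¹) (v * cs.simple k * v⁻¹)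
  have hsplit' := cs.inversionSign_mul (cs.simple k) v⁻¹ (v * cs.simple k * v⁻¹)
  simp only [inv_mul_cancel, inversionSign_one, inv_inv, mul_inv_rev, cs.inv_simple, mul_assoc,
    inv_mul_cancel_left, cs.simple_mul_simple_cancel_left, mul_one, inversionSign_simple_self]
    at hcancel hsplit hsplit'
  rw [mul_assoc, hsplit, hsplit', neg_one_mul, mul_neg, mul_comm, ← hcancel]

theorem isRightInversion_of_inversionSign_eq_neg_one {w t : W}
    (h : cs.inversionSign w t = -1) : cs.IsRightInversion w t := by
  obtain ⟨ω, hω, rfl⟩ := cs.exists_isReduced w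
  rw [inversionSign_wordProd] at h
  have hcount : (cs.rightInvSeq ω).count t ≠ 0 := fun h0 => by simp [h0] at h
  exact cs.isRightInversion_of_mem_rightInvSeq hω
    (List.count_pos_iff.mp (Nat.pos_of_ne_zero hcount))

theorem inversionSign_eq_neg_one_iff {w t : W} (ht : cs.IsReflection t) :
    cs.inversionSign w t = -1 ↔ cs.IsRightInversion w t := by
  refine ⟨cs.isRightInversion_of_inversionSign_eq_neg_one, fun hw => ?_⟩
  have hwt : cs.inversionSign (w * t) t = 1 := by
    refine (Int.units_eq_one_or _).resolve_right fun h => ?_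
    have := (cs.isRightInversion_of_inversionSign_eq_neg_one h).2
    rw [mul_assoc, ht.mul_self, mul_one] at this
    exact absurd hw.2 (by omega)
  calc cs.inversionSign w t = cs.inversionSign (w * t * t) t := by
        rw [mul_assoc, ht.mul_self, mul_one]
    _ = -1 := by
        rw [inversionSign_mul, mul_assoc, mul_inv_cancel, mul_one, hwt,
          cs.inversionSign_self ht, one_mul]

theorem mul_self_eq_one_of_forall_length_le {w₀ : W} (hw₀ : ∀ w, ℓ w ≤ ℓ w₀) : w₀ * w₀ = 1 := by
  have hall : ∀ t, cs.IsReflection t → cs.inversionSign w₀ t = -1 := fun t ht =>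
    (cs.inversionSign_eq_neg_one_iff ht).mpr ⟨ht, (hw₀ _).lt_of_ne (ht.length_mul_left_ne w₀)⟩
  by_contra hne
  obtain ⟨k, hk⟩ := cs.exists_rightDescent_of_ne_one hne
  have hinv := (cs.isRightInversion_simple_iff_isRightDescent _ k).mpr hk
  rw [← cs.inversionSign_eq_neg_one_iff (cs.isReflection_simple k), inversionSign_mul,
    hall _ ((cs.isReflection_simple k).conj w₀), hall _ (cs.isReflection_simple k)] at hinv
  simp at hinv

theorem wordProd_map_of_simple {F : Type*} [FunLike F W W] [MonoidHomClass F W W] (g : F)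
    (f : B → B)
    (hg : ∀ i, g (cs.simple i) = cs.simple (f i)) (ω : List B) : π (ω.map f) = g (π ω) := by
  simp [wordProd, map_list_prod, Function.comp_def, hg]

theorem length_apply_le_of_simple {F : Type*} [FunLike F W W] [MonoidHomClass F W W] (g : F)
    (f : B → B)
    (hg : ∀ i, g (cs.simple i) = cs.simple (f i)) (w : W) : ℓ (g w) ≤ ℓ w := by
  obtain ⟨ω, hω, rfl⟩ := cs.exists_isReduced w
  rw [← cs.wordProd_map_of_simple g f hg, hω.eq]
  exact (cs.length_wordProd_le _).trans (List.length_map _).le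

theorem length_apply_of_simple (g : W ≃* W) (f : B ≃ B)
    (hg : ∀ i, g (cs.simple i) = cs.simple (f i)) (w : W) : ℓ (g w) = ℓ w := by
  have hg' : ∀ i, g.symm (cs.simple i) = cs.simple (f.symm i) := fun i => by
    rw [MulEquiv.symm_apply_eq, hg, Equiv.apply_symm_apply]
  refine (cs.length_apply_le_of_simple g f hg w).antisymm ?_
  simpa using cs.length_apply_le_of_simple g.symm f.symm hg' (g w)

def subwordSum {A : Type*} [CommSemiring A] (L : List (B × A)) (v : W) : A :=
  (L.sublists.map fun s =>
    if π (s.map Prod.fst) = v ∧ s.length = ℓ v then (s.map Prod.snd).prod else 0).sum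

theorem subwordSum_reverse {A : Type*} [CommSemiring A] (L : List (B × A)) (v : W) :
    cs.subwordSum L.reverse v⁻¹ = cs.subwordSum L v := by
  rw [subwordSum, List.sublists_reverse, List.map_map,
    ← ((List.sublists_perm_sublists' L).map _).sum_eq, subwordSum]
  congr 1
  refine List.map_congr_left fun s _ => ?_
  simp [List.map_reverse, List.prod_reverse]

theorem subwordSum_map {A A' F : Type*} [CommSemiring A] [CommSemiring A'] [FunLike F A A']
    [RingHomClass F A A'] (g : W ≃* W) (f : B ≃ B) (hg : ∀ i, g (cs.simple i) = cs.simple (f i))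
    (φ : F) (L : List (B × A)) (v : W) :
    cs.subwordSum (L.map (Prod.map f φ)) (g v) = φ (cs.subwordSum L v) := by
  rw [subwordSum, List.sublists_map, List.map_map, subwordSum, map_list_sum, List.map_map]
  congr 1
  refine List.map_congr_left fun s _ => ?_
  have hfst : (s.map (Prod.map f φ)).map Prod.fst = (s.map Prod.fst).map f := by simp
  have hsnd : (s.map (Prod.map f φ)).map Prod.snd = (s.map Prod.snd).map φ := by simp
  simp only [Function.comp_apply]
  rw [hfst, hsnd, cs.wordProd_map_of_simple g f hg, EmbeddingLike.apply_eq_iff_eq,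
    cs.length_apply_of_simple g f hg, List.length_map, apply_ite φ, map_zero, map_list_prod]

section RootSequence

variable {A : Type*} [CommRing A] (act : W →* RingAut A) (αr : B → A)

/-- The letters `i_j` of a word, decorated by the roots `β_j = s_{i₁} ⋯ s_{i_{j-1}} α_{i_j}`. -/
def rootSeq : List B → List (B × A)
  | [] => []
  | i :: ω => (i, αr i) :: (rootSeq ω).map (Prod.map id (act (cs.simple i)))

theorem rootSeq_concat (ω : List B) (j : B) :
    cs.rootSeq act αr (ω ++ [j]) = cs.rootSeq act αr ω ++ [(j, act (π ω) (αr j))] := by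
  induction ω with
  | nil => simp [rootSeq]
  | cons i ω ih => simp [rootSeq, ih, cs.wordProd_cons]

theorem rootSeq_eq_map_zipIdx (l : List B) :
    cs.rootSeq act αr l =
      (l.zipIdx.map Prod.swap).map fun p => (p.2, act (π (l.take p.1)) (αr p.2)) := by
  induction l with
  | nil => rfl
  | cons i l ih =>
    rw [List.zipIdx_cons']
    simp [rootSeq, ih, Function.comp_def, cs.wordProd_cons]

theorem dCoef_eq_subwordSum (l : List B) (v : W) :
    dCoef cs act αr l v = cs.subwordSum (cs.rootSeq act αr l) v := by
  rw [rootSeq_eq_map_zipIdx, subwordSum, List.sublists_map, List.map_map, dCoef]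
  congr 1
  refine List.map_congr_left fun s _ => ?_
  simp [Function.comp_def]

theorem rootSeq_reverse_map {wS : W} (hwS : wS * wS = 1) {σ : B ≃ B}
    (hσ : ∀ i, MulAut.conj wS (cs.simple i) = cs.simple (σ i))
    (hlongestneg : ∀ i, act wS (αr i) = -αr (σ i))
    (hsimpleneg : ∀ i, act (cs.simple i) (αr i) = -αr i) (ω : List B) :
    cs.rootSeq act αr (ω.reverse.map σ) =
      ((cs.rootSeq act αr ω).map (Prod.map σ (act (wS * (π ω)⁻¹)))).reverse := by
  have hact : ∀ u v a, act (u * v) a = act u (act v a) := fun u v a => by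
    rw [map_mul, RingAut.mul_apply]
  have hασ : ∀ i, act wS (αr (σ i)) = -αr i := fun i => by
    rw [← neg_eq_iff_eq_neg.mpr (hlongestneg i), map_neg, ← hact, hwS, map_one, RingAut.one_apply]
  induction ω with
  | nil => rfl
  | cons i ω ih =>
    rw [List.reverse_cons, List.map_append, List.map_singleton, rootSeq_concat, ih, rootSeq,
      List.map_cons, List.reverse_cons, List.map_map, cs.wordProd_map_of_simple _ σ hσ,
      cs.wordProd_reverse, MulAut.conj_apply, inv_eq_of_mul_eq_one_left hwS]
    have hshift : wS * (π (i :: ω))⁻¹ = wS * (π ω)⁻¹ * cs.simple i := by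
      rw [cs.wordProd_cons, mul_inv_rev, cs.inv_simple, mul_assoc]
    have hcancel : Prod.map σ (act (wS * (π (i :: ω))⁻¹)) ∘ Prod.map id (act (cs.simple i)) =
        Prod.map σ (act (wS * (π ω)⁻¹)) := by
      ext ⟨b, a⟩ : 1
      simp only [Function.comp_apply, Prod.map_apply, id, hshift]
      rw [← hact, mul_assoc, cs.simple_mul_simple_self, mul_one]
    rw [hcancel, hshift, Prod.map_apply, hact _ wS, hact _ (cs.simple i), hασ, hsimpleneg]

end RootSequence

end

end CoxeterSystem

theorem dCoef_star_conjugate_general {B W A : Type*} [Group W] [CommRing A]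
    {M : CoxeterMatrix B} (cs : CoxeterSystem M W)
    (act : W →* RingAut A) (αr : B → A)
    (wS : W) (hwS : ∀ w : W, cs.length w ≤ cs.length wS)
    (σ : B ≃ B) (hσ : ∀ i, cs.simple (σ i) = wS * cs.simple i * wS)
    (hlongestneg : ∀ i, act wS (αr i) = - αr (σ i))
    (hsimpleneg : ∀ i, act (cs.simple i) (αr i) = - αr i)
    (x y : W) (l : List B) (hly : cs.wordProd l = y) :
    dCoef cs act αr (l.reverse.map σ) (wS * x⁻¹ * wS) =
      act (wS * y⁻¹) (dCoef cs act αr l x) := by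
  subst hly
  have hwS2 : wS * wS = 1 := cs.mul_self_eq_one_of_forall_length_le hwS
  have hinv : wS⁻¹ = wS := inv_eq_of_mul_eq_one_left hwS2
  have hconj : ∀ i, MulAut.conj wS (cs.simple i) = cs.simple (σ i) := fun i => by
    rw [hσ, MulAut.conj_apply, hinv]
  have hx : wS * x⁻¹ * wS = (MulAut.conj wS x)⁻¹ := by
    rw [MulAut.conj_apply, hinv, mul_inv_rev, mul_inv_rev, hinv, mul_assoc]
  rw [cs.dCoef_eq_subwordSum, cs.dCoef_eq_subwordSum,
    cs.rootSeq_reverse_map act αr hwS2 hconj hlongestneg hsimpleneg, hx, cs.subwordSum_reverse,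
    cs.subwordSum_map (MulAut.conj wS) σ hconj]

/-- In a finite Weyl group with longest element `w_S`, writing `w^σ = w_S w w_S`,
the localization coefficients satisfy `d_{(x^σ)⁻¹,(y^σ)⁻¹} = w_S y⁻¹ · d_{x,y}`.
Here `σ : B ≃ B` is the induced involution of the simple reflections, and the
`d`-coefficients are computed from a reduced word `l` of `y` and the corresponding
reduced word `l.reverse.map σ` of `(y^σ)⁻¹`. -/
theorem dCoef_star_conjugate {B W A : Type*} [Group W] [Finite W] [CommRing A]
    {M : CoxeterMatrix B} (cs : CoxeterSystem M W)
    (act : W →* RingAut A) (αr : B → A)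
    (wS : W) (hwS : ∀ w : W, cs.length w ≤ cs.length wS)
    (σ : B ≃ B) (hσ : ∀ i, cs.simple (σ i) = wS * cs.simple i * wS)
    (hlongestneg : ∀ i, act wS (αr i) = - αr (σ i))
    (hsimpleneg : ∀ i, act (cs.simple i) (αr i) = - αr i)
    (x y : W) (l : List B) (hl : cs.IsReduced l) (hly : cs.wordProd l = y) :
    dCoef cs act αr (l.reverse.map σ) (wS * x⁻¹ * wS) =
      act (wS * y⁻¹) (dCoef cs act αr l x) :=
  dCoef_star_conjugate_general cs act αr wS hwS σ hσ hlongestneg hsimpleneg x y l hly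
end

section
/- Suppose x, u, v are elements of a Coxeter group with ℓ(uv) = ℓ(u) + ℓ(v). Then d_{x,uv} = Σ d_{u',u}·(u · d_{v',v}), where the sum is over pairs (u', v') with x = u'v' and ℓ(x) = ℓ(u') + ℓ(v'). -/
/-!
A subword of `lu ++ lv`, with the positions of its letters remembered, is uniquely a subword `s`
of `lu` followed by a subword `t` of `lv` shifted by `|lu|`. It is reduced exactly when `s` and `t`
are reduced and `ℓ(π s · π t) = ℓ(π s) + ℓ(π t)`, and a root `β_j` at a position of `lv` is `u`
applied to the corresponding root of `lv`, since the prefix of `lu ++ lv` in front of it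
multiplies to `u` times a prefix of `lv`. So `d_{x,uv}` is the sum of `β(s) · u(β(t))` over pairs
of reduced subwords with `π s · π t = x` and additive lengths, and grouping the pairs according to
`(π s, π t)` gives the right-hand side.
-/

open scoped Classical

namespace CoxeterSystem

variable {B W : Type*} [Group W] {M : CoxeterMatrix B} (cs : CoxeterSystem M W)

theorem isReduced_append_iff (ω ω' : List B) :
    cs.IsReduced (ω ++ ω') ↔ (cs.IsReduced ω ∧ cs.IsReduced ω') ∧
      cs.length (cs.wordProd ω * cs.wordProd ω') =
        cs.length (cs.wordProd ω) + cs.length (cs.wordProd ω') := by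
  have h := cs.length_wordProd_le ω
  have h' := cs.length_wordProd_le ω'
  have hmul := cs.length_mul_le (cs.wordProd ω) (cs.wordProd ω')
  simp only [IsReduced, wordProd_append, List.length_append]
  omega

theorem wordProd_eq_and_length_eq_iff (ω : List B) (w : W) :
    (cs.wordProd ω = w ∧ ω.length = cs.length w) ↔ (cs.IsReduced ω ∧ cs.wordProd ω = w) := by
  constructor
  · rintro ⟨rfl, hlen⟩
    exact ⟨hlen.symm, rfl⟩
  · rintro ⟨hred, rfl⟩
    exact ⟨rfl, hred.symm⟩

end CoxeterSystem

theorem finsum_mem_sum_filter_eq {ι α M : Type*} [AddCommMonoid M] [DecidableEq α]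
    (S : Set α) [DecidablePred (· ∈ S)] (K : Finset ι) (φ : ι → α) (c : ι → M) :
    ∑ᶠ a ∈ S, ∑ k ∈ K with φ k = a, c k = ∑ k ∈ K with φ k ∈ S, c k := by
  set K' := K.filter (φ · ∈ S)
  rw [finsum_mem_eq_sum_of_subset (t := K'.image φ),
    ← Finset.sum_fiberwise_of_maps_to (fun k hk => Finset.mem_image_of_mem φ hk)]
  · refine Finset.sum_congr rfl fun a ha => ?_
    obtain ⟨k, hk, rfl⟩ := Finset.mem_image.mp ha
    rw [Finset.filter_filter]
    refine Finset.sum_congr (Finset.filter_congr fun k' _ => ?_) fun _ _ => rfl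
    have hkS : φ k ∈ S := (Finset.mem_filter.mp hk).2
    exact ⟨fun h => ⟨h ▸ hkS, h⟩, And.right⟩
  · rintro a ⟨haS, hne⟩
    obtain ⟨k, hk, -⟩ := Finset.exists_ne_zero_of_sum_ne_zero hne
    obtain ⟨hkK, rfl⟩ := Finset.mem_filter.mp hk
    exact Finset.mem_image_of_mem φ (Finset.mem_filter.mpr ⟨hkK, haS⟩)
  · intro a ha
    obtain ⟨k, hk, rfl⟩ := Finset.mem_image.mp ha
    exact (Finset.mem_filter.mp hk).2

theorem sum_filter_mul_sum_filter {ι κ α β R : Type*} [CommSemiring R]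
    (s : Finset ι) (t : Finset κ) (f : ι → α) (g : κ → β) (a : α) (b : β) (x : ι → R) (y : κ → R) :
    (∑ i ∈ s with f i = a, x i) * (∑ j ∈ t with g j = b, y j) =
      ∑ ij ∈ s ×ˢ t with (f ij.1, g ij.2) = (a, b), x ij.1 * y ij.2 := by
  rw [Finset.sum_mul_sum, ← Finset.sum_product', ← Finset.filter_product]
  simp only [Prod.mk.injEq]

section Subwords

variable {B W A : Type*} [Group W] [CommRing A] {M : CoxeterMatrix B}
  (cs : CoxeterSystem M W) (act : W →* RingAut A) (αr : B → A)

/-- The pairs `(j, l[j])`. Subwords of `l` are encoded as sublists of this list, so that they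
remember the positions of their letters. -/
def indexedLetters (l : List B) : List (ℕ × B) :=
  l.zipIdx.map Prod.swap

theorem indexedLetters_append (l₁ l₂ : List B) :
    indexedLetters (l₁ ++ l₂) =
      indexedLetters l₁ ++ (indexedLetters l₂).map (Prod.map (· + l₁.length) id) := by
  have hshift := List.map_snd_add_zipIdx_eq_zipIdx (l := l₂) (n := l₁.length) (k := 0)
  rw [Nat.add_zero] at hshift
  simp only [indexedLetters, List.zipIdx_append, Nat.zero_add, List.map_append, ← hshift,
    List.map_map]
  rfl

theorem fst_lt_length_of_mem_indexedLetters {l : List B} {p : ℕ × B}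
    (hp : p ∈ indexedLetters l) : p.1 < l.length := by
  obtain ⟨q, hq, rfl⟩ := List.mem_map.mp hp
  simpa using List.snd_lt_of_mem_zipIdx hq

theorem nodup_sublists_indexedLetters (l : List B) : (indexedLetters l).sublists.Nodup := by
  refine List.nodup_sublists.mpr (List.Nodup.of_map Prod.fst ?_)
  rw [indexedLetters, List.map_map]
  exact (List.zipIdx_map_snd 0 l).symm ▸ List.nodup_range'

noncomputable def subwords (l : List B) : Finset (List (ℕ × B)) :=
  (indexedLetters l).sublists.toFinset

noncomputable def subwordProd (s : List (ℕ × B)) : W :=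
  cs.wordProd (s.map Prod.snd)

noncomputable def reducedSubwords (l : List B) : Finset (List (ℕ × B)) :=
  (subwords l).filter fun s => cs.IsReduced (s.map Prod.snd)

/-- The product `β_{j₁} ⋯ β_{j_m}` of `dCoef`, for the subword `s` of `l`. -/
noncomputable def rootProduct (l : List B) (s : List (ℕ × B)) : A :=
  (s.map fun p => act (cs.wordProd (l.take p.1)) (αr p.2)).prod

theorem rootProduct_append {l₁ : List B} (l₂ : List B) {s : List (ℕ × B)}
    (hs : ∀ p ∈ s, p.1 < l₁.length) (t : List (ℕ × B)) :
    rootProduct cs act αr (l₁ ++ l₂) (s ++ t.map (Prod.map (· + l₁.length) id)) =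
      rootProduct cs act αr l₁ s * act (cs.wordProd l₁) (rootProduct cs act αr l₂ t) := by
  simp only [rootProduct, List.map_append, List.prod_append, List.map_map, map_list_prod]
  congr 1
  · refine congrArg List.prod (List.map_congr_left fun p hp => ?_)
    rw [List.take_append_of_le_length (hs p hp).le]
  · refine congrArg List.prod (List.map_congr_left fun p _ => ?_)
    simp [Nat.add_comm p.1, List.take_length_add_append, cs.wordProd_append]

theorem dCoef_eq_sum_reducedSubwords (l : List B) (y : W) :
    dCoef cs act αr l y =
      ∑ s ∈ reducedSubwords cs l with subwordProd cs s = y, rootProduct cs act αr l s := by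
  rw [reducedSubwords, Finset.filter_filter, Finset.sum_filter, subwords,
    List.sum_toFinset _ (nodup_sublists_indexedLetters l), dCoef, indexedLetters]
  exact congrArg List.sum (List.map_congr_left fun s _ =>
    if_congr (cs.wordProd_eq_and_length_eq_iff _ y) rfl rfl)

theorem dCoef_append (l₁ l₂ : List B) (x : W) :
    dCoef cs act αr (l₁ ++ l₂) x =
      ∑ st ∈ reducedSubwords cs l₁ ×ˢ reducedSubwords cs l₂ with
          subwordProd cs st.1 * subwordProd cs st.2 = x ∧
          cs.length (subwordProd cs st.1 * subwordProd cs st.2) =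
            cs.length (subwordProd cs st.1) + cs.length (subwordProd cs st.2),
        rootProduct cs act αr l₁ st.1 * act (cs.wordProd l₁) (rootProduct cs act αr l₂ st.2) := by
  set shift : ℕ × B → ℕ × B := Prod.map (· + l₁.length) id
  have hsplit : dCoef cs act αr (l₁ ++ l₂) x = ∑ st ∈ subwords l₁ ×ˢ subwords l₂,
      if cs.wordProd ((st.1 ++ st.2.map shift).map Prod.snd) = x ∧
          ((st.1 ++ st.2.map shift).map Prod.snd).length = cs.length x then
        rootProduct cs act αr (l₁ ++ l₂) (st.1 ++ st.2.map shift) else 0 := by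
    rw [Finset.sum_product_right, subwords, subwords,
      List.sum_toFinset _ (nodup_sublists_indexedLetters l₂), dCoef]
    change ((indexedLetters (l₁ ++ l₂)).sublists.map _).sum = _
    rw [indexedLetters_append, List.sublists_append, List.sublists_map, List.bind_eq_flatMap,
      List.flatMap_map, List.flatMap_def, List.map_flatten, List.sum_flatten, List.map_map,
      List.map_map]
    refine congrArg List.sum (List.map_congr_left fun t _ => ?_)
    simp only [Function.comp_apply, List.map_map]
    rw [List.sum_toFinset _ (nodup_sublists_indexedLetters l₁)]
    rfl
  rw [hsplit, reducedSubwords, reducedSubwords, ← Finset.filter_product, Finset.filter_filter,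
    Finset.sum_filter]
  refine Finset.sum_congr rfl fun ⟨s, t⟩ hst => ?_
  have hs : ∀ p ∈ s, p.1 < l₁.length := fun p hp =>
    fst_lt_length_of_mem_indexedLetters <| (List.mem_sublists.mp <| List.mem_toFinset.mp
      (Finset.mem_product.mp hst).1).subset hp
  have hletters : (s ++ t.map shift).map Prod.snd = s.map Prod.snd ++ t.map Prod.snd := by
    simp only [List.map_append, List.map_map]
    rfl
  rw [rootProduct_append cs act αr l₂ hs t, hletters]
  refine if_congr ?_ rfl rfl
  rw [cs.wordProd_eq_and_length_eq_iff, cs.isReduced_append_iff, cs.wordProd_append]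
  simp only [subwordProd]
  tauto

end Subwords

theorem dCoef_length_additive_product_general {B W A : Type*} [Group W] [CommRing A]
    {M : CoxeterMatrix B} (cs : CoxeterSystem M W)
    (act : W →* RingAut A) (αr : B → A)
    (x u : W)
    (lu lv : List B) (hlur : cs.wordProd lu = u) :
    dCoef cs act αr (lu ++ lv) x =
      ∑ᶠ p ∈ {p : W × W | x = p.1 * p.2 ∧ cs.length x = cs.length p.1 + cs.length p.2},
        dCoef cs act αr lu p.1 * act u (dCoef cs act αr lv p.2) := by
  subst hlur
  have hfactor : ∀ p : W × W,
      dCoef cs act αr lu p.1 * act (cs.wordProd lu) (dCoef cs act αr lv p.2) =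
        ∑ st ∈ reducedSubwords cs lu ×ˢ reducedSubwords cs lv with
            (subwordProd cs st.1, subwordProd cs st.2) = p,
          rootProduct cs act αr lu st.1 *
            act (cs.wordProd lu) (rootProduct cs act αr lv st.2) := fun p => by
    rw [dCoef_eq_sum_reducedSubwords, dCoef_eq_sum_reducedSubwords, map_sum,
      sum_filter_mul_sum_filter]
  rw [finsum_mem_congr rfl fun p _ => hfactor p, finsum_mem_sum_filter_eq, dCoef_append]
  refine Finset.sum_congr (Finset.filter_congr fun st _ => ?_) fun _ _ => rfl
  rw [Set.mem_ofPred_eq, eq_comm (a := x)]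
  exact and_congr_right fun hx => by rw [hx]

/-- If `ℓ(uv) = ℓ(u) + ℓ(v)` then
`d_{x,uv} = Σ d_{u',u} · (u · d_{v',v})`, summed over pairs `(u', v')` with
`x = u'v'` and `ℓ(x) = ℓ(u') + ℓ(v')`.  The coefficients are computed from reduced
words `lu` for `u` and `lv` for `v` (so that `lu ++ lv` is a reduced word for `uv`). -/
theorem dCoef_length_additive_product {B W A : Type*} [Group W] [CommRing A]
    {M : CoxeterMatrix B} (cs : CoxeterSystem M W)
    (act : W →* RingAut A) (αr : B → A)
    (x u v : W) (hlen : cs.length (u * v) = cs.length u + cs.length v)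
    (lu lv : List B) (hlu : cs.IsReduced lu) (hlur : cs.wordProd lu = u)
    (hlv : cs.IsReduced lv) (hlvr : cs.wordProd lv = v) :
    dCoef cs act αr (lu ++ lv) x =
      ∑ᶠ p ∈ {p : W × W | x = p.1 * p.2 ∧ cs.length x = cs.length p.1 + cs.length p.2},
        dCoef cs act αr lu p.1 * act u (dCoef cs act αr lv p.2) :=
  dCoef_length_additive_product_general cs act αr x u lu lv hlur
end
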